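/- arXiv:1803.05692 — 3 statements merged into one kernel-verified Lean document; each statement's English description precedes it below -/
import Mathlib

section
/- Let φ : [1,∞) → [1,∞) be a strictly increasing continuous bijection onto its range with inverse h, and define ψ(x) = φ(x+1) − φ(x), assuming ψ(x) ≤ 1/2 for all x ≥ 1. Then for a natural number p ≥ 1, there exists n ∈ ℕ with p = ⌊h(n)⌋ if and only if the fractional part {−φ(p)} satisfies 0 ≤ {−φ(p)} < ψ(p). -/
open Set

/-- Characterization of primes (here: integers `p ≥ 1`) of the form `⌊h(n)⌋`:
if `φ : [1,∞) → [1,∞)` is a strictly increasing continuous bijection with inverse `h`,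
`ψ(x) = φ(x+1) - φ(x)` satisfies `0 < ψ ≤ 1/2`, then for `p ≥ 1`,
`p = ⌊h(n)⌋` for some `n ∈ ℕ` iff `{-φ(p)} < ψ(p)`. -/
theorem floor_inverse_mem_iff_fract_neg_lt
    (φ h : ℝ → ℝ)
    (hφmono : StrictMonoOn φ (Ici (1 : ℝ)))
    (hφcont : ContinuousOn φ (Ici (1 : ℝ)))
    (hφmaps : MapsTo φ (Ici (1 : ℝ)) (Ici (1 : ℝ)))
    (hhmaps : MapsTo h (Ici (1 : ℝ)) (Ici (1 : ℝ)))
    (hinv₁ : ∀ x ∈ Ici (1 : ℝ), h (φ x) = x)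
    (hinv₂ : ∀ x ∈ Ici (1 : ℝ), φ (h x) = x)
    (ψ : ℝ → ℝ) (hψdef : ∀ x, ψ x = φ (x + 1) - φ x)
    (hψpos : ∀ x ≥ (1 : ℝ), 0 < ψ x)
    (hψle : ∀ x ≥ (1 : ℝ), ψ x ≤ 1 / 2)
    (p : ℕ) (hp : 1 ≤ p) :
    (∃ n : ℕ, 1 ≤ n ∧ (p : ℤ) = ⌊h n⌋) ↔
      Int.fract (-(φ p)) < ψ p := by
  have hp1 : (1 : ℝ) ≤ (p : ℝ) := by exact_mod_cast hp
  have hp1' : (p : ℝ) ∈ Ici (1 : ℝ) := hp1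
  have hp2 : ((p : ℝ) + 1) ∈ Ici (1 : ℝ) := by
    simp only [mem_Ici]; linarith
  have hφp : (1 : ℝ) ≤ φ p := hφmaps hp1'
  have key : Int.fract (-(φ (p : ℝ))) = (⌈φ (p : ℝ)⌉ : ℝ) - φ p := by
    rw [Int.fract, Int.floor_neg]
    push_cast
    ring
  constructor
  · rintro ⟨n, hn1, hpn⟩
    have hn1' : (1 : ℝ) ≤ (n : ℝ) := by exact_mod_cast hn1
    have hhn : h n ∈ Ici (1 : ℝ) := hhmaps hn1'
    have hle : (p : ℝ) ≤ h n := by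
      have := Int.floor_le (h (n : ℝ))
      rw [← hpn] at this
      exact_mod_cast this
    have hlt : h n < (p : ℝ) + 1 := by
      have := Int.lt_floor_add_one (h (n : ℝ))
      rw [← hpn] at this
      exact_mod_cast this
    have h1 : φ (p : ℝ) ≤ (n : ℝ) := by
      have := hφmono.monotoneOn hp1' hhn hle
      rwa [hinv₂ _ hn1'] at this
    have h2 : (n : ℝ) < φ ((p : ℝ) + 1) := by
      have := hφmono hhn hp2 hlt
      rwa [hinv₂ _ hn1'] at this
    have hceil : (⌈φ (p : ℝ)⌉ : ℝ) ≤ (n : ℝ) := by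
      exact_mod_cast Int.ceil_le.mpr (by exact_mod_cast h1)
    rw [key, hψdef]
    push_cast
    linarith
  · intro hfr
    rw [key, hψdef] at hfr
    set m : ℤ := ⌈φ (p : ℝ)⌉ with hm
    have hm1 : (1 : ℤ) ≤ m := by
      exact Int.one_le_ceil_iff.mpr (by linarith)
    have hm1' : (1 : ℝ) ≤ (m : ℝ) := by exact_mod_cast hm1
    have hhm : h m ∈ Ici (1 : ℝ) := hhmaps hm1'
    have hφhm : φ (h (m : ℝ)) = (m : ℝ) := hinv₂ _ hm1'
    have hle : φ (p : ℝ) ≤ (m : ℝ) := Int.le_ceil _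
    have hlt : (m : ℝ) < φ ((p : ℝ) + 1) := by push_cast; linarith
    have h1 : (p : ℝ) ≤ h m := by
      have := (hφmono.le_iff_le hp1' hhm).mp (by rw [hφhm]; exact hle)
      exact this
    have h2 : h m < (p : ℝ) + 1 := by
      exact (hφmono.lt_iff_lt hhm hp2).mp (by rw [hφhm]; exact hlt)
    refine ⟨m.toNat, ?_, ?_⟩
    · omega
    · have hmn : ((m.toNat : ℕ) : ℝ) = (m : ℝ) := by
        exact_mod_cast Int.toNat_of_nonneg (by omega)
      rw [hmn]
      symm
      rw [Int.floor_eq_iff]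
      constructor
      · exact_mod_cast h1
      · exact_mod_cast h2
end

section
/- Vaughan's identity: for any real u ≥ 1 and any integer n > u, Λ(n) = Σ_{jk=n, j>u, k>u} Λ(k) a_j + Σ_{jk=n, j≤u} μ(j) log(k) − Σ_{jk=n, j≤u²} b_j, where a_j = Σ_{dℓ=j, d>u} μ(d) and b_j = Σ_{dℓ=j, d≤u, ℓ≤u} μ(d)Λ(ℓ). -/
/-!
Write `μ = μ₁ + μ₂` and `Λ = Λ₁ + Λ₂`, splitting each function at `u` (`μ₁`, `Λ₁` supported on
`[1, u]`). In the ring of arithmetic functions `a = μ₂ * ζ`, `b = μ₁ * Λ₁` and `log = Λ * ζ`, so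
`μ₂ * ζ * Λ₂ + μ₁ * log - μ₁ * Λ₁ * ζ = (μ₂ + μ₁) * ζ * Λ₂ = Λ₂`, because `μ * ζ = 1`; at `n > u`
this reads `Λ(n)`. The side conditions `j > u` and `j ≤ u²` in the three sums are harmless since
`a` vanishes on `[1, u]` and `b` vanishes beyond `u²`.
-/

open ArithmeticFunction Finset
open scoped ArithmeticFunction.Moebius ArithmeticFunction.zeta

namespace ArithmeticFunction

variable {R : Type*}

def restrict [Zero R] (f : ArithmeticFunction R) (p : ℕ → Prop) [DecidablePred p] :
    ArithmeticFunction R :=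
  ⟨fun n => if p n then f n else 0, by simp⟩

@[simp]
theorem restrict_apply [Zero R] (f : ArithmeticFunction R) (p : ℕ → Prop) [DecidablePred p]
    (n : ℕ) : f.restrict p n = if p n then f n else 0 :=
  rfl

theorem restrict_add_restrict_not [AddMonoid R] (f : ArithmeticFunction R) (p : ℕ → Prop)
    [DecidablePred p] : f.restrict p + f.restrict (¬p ·) = f := by
  ext n
  by_cases h : p n <;> simp [h]

theorem mul_apply_eq_sum_divisors [Semiring R] (f g : ArithmeticFunction R) (n : ℕ) :
    (f * g) n = ∑ d ∈ n.divisors, f d * g (n / d) :=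
  Nat.sum_divisorsAntidiagonal fun d e => f d * g e

theorem restrict_not_le_mul_apply_eq_zero [Semiring R] (f g : ArithmeticFunction R) {u : ℝ}
    {n : ℕ} (hn : (n : ℝ) ≤ u) : (f.restrict (fun k => ¬(k : ℝ) ≤ u) * g) n = 0 := by
  rw [mul_apply_eq_sum_divisors]
  refine sum_eq_zero fun d hd => ?_
  have hdu : (d : ℝ) ≤ u := (Nat.cast_le.mpr (Nat.divisor_le hd)).trans hn
  rw [restrict_apply, if_neg (not_not.mpr hdu), zero_mul]

theorem restrict_le_mul_restrict_le_apply_eq_zero [Semiring R] (f g : ArithmeticFunction R)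
    {u v : ℝ} {n : ℕ} (hn : u * v < n) :
    (f.restrict (fun k => (k : ℝ) ≤ u) * g.restrict (fun k => (k : ℝ) ≤ v)) n = 0 := by
  rw [mul_apply]
  refine sum_eq_zero fun x hx => ?_
  rw [restrict_apply, restrict_apply, ite_zero_mul_ite_zero, ite_eq_right_iff]
  rintro ⟨h₁, h₂⟩
  have : (n : ℝ) ≤ u * v := by
    rw [← (Nat.mem_divisorsAntidiagonal.mp hx).1, Nat.cast_mul]
    exact mul_le_mul h₁ h₂ x.2.cast_nonneg (x.1.cast_nonneg.trans h₁)
  exact absurd hn this.not_gt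

theorem vonMangoldt_restrict_not_eq (p q : ℕ → Prop) [DecidablePred p] [DecidablePred q] :
    (Λ).restrict (¬q ·) =
      (μ : ArithmeticFunction ℝ).restrict (¬p ·) * ζ * (Λ).restrict (¬q ·)
        + (μ : ArithmeticFunction ℝ).restrict p * log
        - (μ : ArithmeticFunction ℝ).restrict p * (Λ).restrict q * ζ := by
  have hμ := restrict_add_restrict_not (μ : ArithmeticFunction ℝ) p
  have hΛ := restrict_add_restrict_not Λ q
  rw [← vonMangoldt_mul_zeta]
  linear_combination -(Λ).restrict (¬q ·) * coe_moebius_mul_coe_zeta (R := ℝ)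
    - ζ * (Λ).restrict (¬q ·) * hμ + (μ : ArithmeticFunction ℝ).restrict p * ζ * hΛ

end ArithmeticFunction

theorem vaughan_identity_general
    (u : ℝ) (n : ℕ) (hn : u < n)
    (a b : ℕ → ℝ)
    (ha : ∀ j, a j = ∑ d ∈ j.divisors, if u < (d : ℝ) then (μ d : ℝ) else 0)
    (hb : ∀ j, b j = ∑ d ∈ j.divisors, if (d : ℝ) ≤ u ∧ ((j / d : ℕ) : ℝ) ≤ u then
      (μ d : ℝ) * Λ (j / d) else 0) :
    Λ n =
      (∑ j ∈ n.divisors, if u < (j : ℝ) ∧ u < ((n / j : ℕ) : ℝ) then Λ (n / j) * a j else 0)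
      + (∑ j ∈ n.divisors, if (j : ℝ) ≤ u then (μ j : ℝ) * Real.log ((n / j : ℕ) : ℝ) else 0)
      - (∑ j ∈ n.divisors, if (j : ℝ) ≤ u ^ 2 then b j else 0) := by
  set p : ℕ → Prop := fun k => (k : ℝ) ≤ u
  set μ₁ := (μ : ArithmeticFunction ℝ).restrict p
  set μ₂ := (μ : ArithmeticFunction ℝ).restrict (¬p ·)
  set Λ₁ := (Λ).restrict p
  set Λ₂ := (Λ).restrict (¬p ·)
  have ha' : ∀ j, a j = (μ₂ * ζ) j := fun j => by
    simp only [ha, coe_mul_zeta_apply, μ₂, p, restrict_apply, intCoe_apply, not_le]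
  have hb' : ∀ j, b j = (μ₁ * Λ₁) j := fun j => by
    simp only [hb, mul_apply_eq_sum_divisors, μ₁, Λ₁, p, restrict_apply, intCoe_apply,
      ite_zero_mul_ite_zero]
  have h₁ : (∑ j ∈ n.divisors,
      if u < (j : ℝ) ∧ u < ((n / j : ℕ) : ℝ) then Λ (n / j) * a j else 0) = (μ₂ * ζ * Λ₂) n := by
    rw [mul_apply_eq_sum_divisors]
    refine sum_congr rfl fun j _ => ?_
    rw [ha']
    by_cases hj : u < j
    · simp [Λ₂, p, hj, mul_comm]
    · rw [restrict_not_le_mul_apply_eq_zero _ _ (not_lt.mp hj), zero_mul, if_neg (hj ·.1)]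
  have h₂ : (∑ j ∈ n.divisors, if (j : ℝ) ≤ u then (μ j : ℝ) * Real.log ((n / j : ℕ) : ℝ) else 0)
      = (μ₁ * log) n := by
    simp only [mul_apply_eq_sum_divisors, μ₁, p, restrict_apply, intCoe_apply, ite_mul, zero_mul,
      log_apply]
  have h₃ : (∑ j ∈ n.divisors, if (j : ℝ) ≤ u ^ 2 then b j else 0) = (μ₁ * Λ₁ * ζ) n := by
    rw [coe_mul_zeta_apply]
    refine sum_congr rfl fun j _ => ?_
    rw [hb', ite_eq_left_iff, not_le, sq]
    exact fun hj => (restrict_le_mul_restrict_le_apply_eq_zero _ _ hj).symm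
  calc Λ n = Λ₂ n := by simp [Λ₂, p, hn]
    _ = (μ₂ * ζ * Λ₂ + μ₁ * log - μ₁ * Λ₁ * ζ) n :=
      DFunLike.congr_fun (vonMangoldt_restrict_not_eq p p) n
    _ = _ := by
      rw [h₁, h₂, h₃, sub_eq_add_neg, ArithmeticFunction.add_apply,
        ArithmeticFunction.add_apply, ArithmeticFunction.neg_apply, ← sub_eq_add_neg]

/-- Vaughan's identity: for `u ≥ 1` and `n > u`,
`Λ(n) = Σ_{jk=n, j>u, k>u} Λ(k) a_j + Σ_{jk=n, j≤u} μ(j) log k − Σ_{jk=n, j≤u²} b_j`,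
where `a_j = Σ_{dℓ=j, d>u} μ(d)` and `b_j = Σ_{dℓ=j, d≤u, ℓ≤u} μ(d) Λ(ℓ)`. -/
theorem vaughan_identity
    (u : ℝ) (hu : 1 ≤ u) (n : ℕ) (hn : u < n)
    (a b : ℕ → ℝ)
    (ha : ∀ j, a j = ∑ d ∈ j.divisors, if u < (d : ℝ) then (μ d : ℝ) else 0)
    (hb : ∀ j, b j = ∑ d ∈ j.divisors, if (d : ℝ) ≤ u ∧ ((j / d : ℕ) : ℝ) ≤ u then
      (μ d : ℝ) * Λ (j / d) else 0) :
    Λ n =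
      (∑ j ∈ n.divisors, if u < (j : ℝ) ∧ u < ((n / j : ℕ) : ℝ) then Λ (n / j) * a j else 0)
      + (∑ j ∈ n.divisors, if (j : ℝ) ≤ u then (μ j : ℝ) * Real.log ((n / j : ℕ) : ℝ) else 0)
      - (∑ j ∈ n.divisors, if (j : ℝ) ≤ u ^ 2 then b j else 0) :=
  vaughan_identity_general u n hn a b ha hb
end

section
/- Let (a_N)_{N≥1} and (b_N)_{N≥1} be sequences of complex numbers such that a_N = Σ_{n≤N} c_n w_n and b_N = Σ_{n≤N} c_n v_n for the same complex coefficients c_n, where w_n, v_n > 0 and the ratio w_n/v_n is monotonically decreasing in n. Then there exists an absolute constant C > 0 such that for all r > 2, V_r(a_N/A_N : N) ≤ C · V_r(b_N/B_N : N), where A_N = Σ_{n≤N} w_n and B_N = Σ_{n≤N} v_n — in particular, r-variational bounds for weighted averages transfer between comparable monotone weights. -/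
/-!
With `λ = w / v`, Abel summation writes `a_N / A_N = Σ_{n ≤ N} μ_N(n) · b_n / B_n`, where
`μ_N(n) = (λ_n - λ_{n+1}) B_n / A_N` for `n < N` and `μ_N(N) = λ_N B_N / A_N`. These are
probability weights because `λ` decreases, and for `m < N` their distribution function is
`S_m / A_N` with `S_m` independent of `N`, so `μ_N` increases stochastically with `N`. Coupling
all `μ_N` through their quantile functions `Q_N` on `(0, 1]` gives
`a_N / A_N = ∫ b_{Q_N(t)} / B_{Q_N(t)} dt` with `N ↦ Q_N(t)` nondecreasing for every `t`.
Jensen's inequality for `‖·‖ ^ r` then bounds every variation sum of the `a_N / A_N` by an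
average of variation sums of the `b_N / B_N` along monotone index sequences, so `C = 1` works,
for every `r ≥ 1`.
-/

open scoped ENNReal

/-- The `r`-variational seminorm of a sequence indexed by the set `A ⊆ ℕ`. -/
noncomputable def rVar (r : ℝ) (a : ℕ → ℂ) (A : Set ℕ) : ℝ≥0∞ :=
  ⨆ (J : ℕ) (k : Fin (J + 1) → ℕ) (_ : StrictMono k) (_ : ∀ j, k j ∈ A),
    ENNReal.ofReal
      ((∑ j : Fin J, ‖a (k j.succ) - a (k j.castSucc)‖ ^ r) ^ (1 / r))

open Finset MeasureTheory

section VariationSum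

variable {E : Type*} [SeminormedAddCommGroup E] {r : ℝ}

noncomputable def variationSum (r : ℝ) {J : ℕ} (u : Fin (J + 1) → E) : ℝ :=
  ∑ j : Fin J, ‖u j.succ - u j.castSucc‖ ^ r

lemma variationSum_nonneg {J : ℕ} (u : Fin (J + 1) → E) : 0 ≤ variationSum r u :=
  sum_nonneg fun _ _ => Real.rpow_nonneg (norm_nonneg _) r

lemma variationSum_eq_init_add {J : ℕ} (u : Fin (J + 2) → E) :
    variationSum r u =
      variationSum r (Fin.init u) + ‖u (Fin.last (J + 1)) - u (Fin.last J).castSucc‖ ^ r := by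
  simp only [variationSum, Fin.sum_univ_castSucc, Fin.succ_last, Fin.init]
  rfl

lemma exists_strictMono_variationSum_le (x : ℕ → E) (hr : r ≠ 0) {A : Set ℕ} :
    ∀ {J : ℕ} (m : Fin (J + 1) → ℕ), Monotone m → (∀ j, m j ∈ A) →
      ∃ (L : ℕ) (k : Fin (L + 1) → ℕ), StrictMono k ∧ (∀ i, k i ∈ A) ∧
        k (Fin.last L) = m (Fin.last J) ∧ variationSum r (x ∘ m) ≤ variationSum r (x ∘ k)
  | 0, m, _, hmA => ⟨0, m, fun i j h => absurd (Fin.lt_def.mp h) (by omega), hmA, rfl, le_rfl⟩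
  | J + 1, m, hm, hmA => by
    obtain ⟨L, k, hk, hkA, hlast, hsum⟩ := exists_strictMono_variationSum_le x hr (Fin.init m)
      (hm.comp Fin.strictMono_castSucc.monotone) fun j => hmA _
    rw [variationSum_eq_init_add]
    simp only [Function.comp_apply]
    rcases (hm (Fin.le_last (Fin.last J).castSucc)).eq_or_lt with heq | hlt
    · refine ⟨L, k, hk, hkA, hlast.trans heq, ?_⟩
      rw [← heq, sub_self, norm_zero, Real.zero_rpow hr, add_zero]
      exact hsum
    · have hlt' : k (Fin.last L) < m (Fin.last (J + 1)) := hlast ▸ hlt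
      refine ⟨L + 1, Fin.snoc k (m (Fin.last (J + 1))), ?_,
        fun i => Fin.lastCases (by simpa using hmA _) (fun i => by simpa using hkA i) i,
        by simp, ?_⟩
      · simpa [Fin.insertNth_last'] using Fin.strictMono_insertNth_last hk _ hlt'
      · rw [variationSum_eq_init_add]
        have hinit : Fin.init (x ∘ Fin.snoc k (m (Fin.last (J + 1)))) = x ∘ k :=
          funext fun i => by simp [Fin.init]
        simp only [Function.comp_apply, Fin.snoc_last, Fin.snoc_castSucc, hinit, hlast]
        exact add_le_add_left hsum _

end VariationSum

section RVar

variable {r : ℝ} {x y : ℕ → ℂ} {A : Set ℕ}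

lemma ofReal_rpow_one_div_le_iff {s : ℝ} {R : ℝ≥0∞} (hs : 0 ≤ s) (hr : 0 < r) (hR : R ≠ ⊤) :
    ENNReal.ofReal (s ^ (1 / r)) ≤ R ↔ s ≤ R.toReal ^ r := by
  rw [ENNReal.ofReal_le_iff_le_toReal hR, one_div,
    Real.rpow_inv_le_iff_of_pos hs ENNReal.toReal_nonneg hr]

lemma rVar_le_of_variationSum_le (hr : 0 < r) {R : ℝ≥0∞} (hR : R ≠ ⊤)
    (h : ∀ (J : ℕ) (k : Fin (J + 1) → ℕ), StrictMono k → (∀ j, k j ∈ A) →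
      variationSum r (y ∘ k) ≤ R.toReal ^ r) :
    rVar r y A ≤ R := by
  unfold rVar
  refine iSup_le fun J => iSup_le fun k => iSup_le fun hk => iSup_le fun hkA => ?_
  exact (ofReal_rpow_one_div_le_iff (variationSum_nonneg (y ∘ k)) hr hR).2 (h J k hk hkA)

lemma variationSum_le_toReal_rVar_rpow (hr : 0 < r) (hx : rVar r x A ≠ ⊤) {J : ℕ}
    {m : Fin (J + 1) → ℕ} (hm : Monotone m) (hmA : ∀ j, m j ∈ A) :
    variationSum r (x ∘ m) ≤ (rVar r x A).toReal ^ r := by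
  obtain ⟨L, k, hk, hkA, -, hle⟩ := exists_strictMono_variationSum_le x hr.ne' m hm hmA
  refine hle.trans ((ofReal_rpow_one_div_le_iff (variationSum_nonneg _) hr hx).1 ?_)
  exact le_iSup_of_le L <| le_iSup_of_le k <| le_iSup_of_le hk <| le_iSup_of_le hkA le_rfl

end RVar

section Quantile

noncomputable def cdf (μ : ℕ → ℝ) (m : ℕ) : ℝ := ∑ n ∈ Icc 1 m, μ n

variable {μ : ℕ → ℝ}

@[simp] lemma cdf_zero (μ : ℕ → ℝ) : cdf μ 0 = 0 := by simp [cdf]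

lemma cdf_succ (μ : ℕ → ℝ) (m : ℕ) : cdf μ (m + 1) = cdf μ m + μ (m + 1) :=
  sum_Icc_succ_top (by omega) μ

lemma cdf_nonneg (hμ : ∀ n, 0 ≤ μ n) (m : ℕ) : 0 ≤ cdf μ m :=
  sum_nonneg fun n _ => hμ n

lemma monotone_cdf (hμ : ∀ n, 0 ≤ μ n) : Monotone (cdf μ) :=
  monotone_nat_of_le_succ fun m => by simp [cdf_succ, hμ]

-- Capping `t` at `1` keeps the set nonempty, so `sInf` never returns its junk value `0`.
noncomputable def quantile (G : ℕ → ℝ) (t : ℝ) : ℕ := sInf {n | min t 1 ≤ G n}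

variable {G G' : ℕ → ℝ} {K : ℕ}

lemma quantile_le (hK : 1 ≤ G K) (t : ℝ) : quantile G t ≤ K :=
  Nat.sInf_le ((min_le_right t 1).trans hK)

lemma min_le_apply_quantile (hK : 1 ≤ G K) (t : ℝ) : min t 1 ≤ G (quantile G t) :=
  Nat.sInf_mem (s := {n | min t 1 ≤ G n}) ⟨K, (min_le_right t 1).trans hK⟩

lemma quantile_le_quantile (hK : 1 ≤ G' K) (h : G' ≤ G) (t : ℝ) :
    quantile G t ≤ quantile G' t :=
  Nat.sInf_le ((min_le_apply_quantile hK t).trans (h _))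

lemma quantile_pos (hK : 1 ≤ G K) (hG0 : G 0 = 0) {t : ℝ} (ht : 0 < t) : 0 < quantile G t := by
  refine Nat.pos_of_ne_zero fun h => ?_
  have := min_le_apply_quantile hK t
  rw [h, hG0] at this
  exact (lt_min ht one_pos).not_ge this

lemma quantile_eq_of_mem_Ioc (hG : Monotone G) {M : ℕ} (hM : G (M + 1) ≤ 1) {t : ℝ}
    (ht : t ∈ Set.Ioc (G M) (G (M + 1))) : quantile G t = M + 1 := by
  have hmin : min t 1 = t := min_eq_left (ht.2.trans hM)
  have hmem : M + 1 ∈ {n | min t 1 ≤ G n} := by simpa [hmin] using ht.2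
  refine le_antisymm (Nat.sInf_le hmem) (not_lt.1 fun hlt => ?_)
  have h1 : min t 1 ≤ G (quantile G t) := Nat.sInf_mem ⟨_, hmem⟩
  rw [hmin] at h1
  exact ht.1.not_ge (h1.trans (hG (Nat.lt_succ_iff.1 hlt)))

variable {E : Type*} [NormedAddCommGroup E]

lemma integrableOn_comp_quantile_cdf (x : ℕ → E) (hμ : ∀ n, 0 ≤ μ n) {M : ℕ}
    (hM : cdf μ M ≤ 1) :
    IntegrableOn (fun t => x (quantile (cdf μ) t)) (Set.Ioc 0 (cdf μ M)) := by
  induction M with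
  | zero => simp
  | succ M ih =>
    have hle := monotone_cdf hμ M.le_succ
    rw [← Set.Ioc_union_Ioc_eq_Ioc (cdf_nonneg hμ M) hle]
    exact (ih (hle.trans hM)).union ((integrableOn_const measure_Ioc_lt_top.ne).congr_fun
      (fun t ht => congrArg x (quantile_eq_of_mem_Ioc (monotone_cdf hμ) hM ht).symm)
      measurableSet_Ioc)

lemma memLp_comp_quantile_cdf (x : ℕ → E) (hμ : ∀ n, 0 ≤ μ n) (hK : cdf μ K = 1)
    (p : ℝ≥0∞) : MemLp (fun t => x (quantile (cdf μ) t)) p (volume.restrict (Set.Ioc 0 1)) := by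
  have hint := integrableOn_comp_quantile_cdf x hμ hK.le
  rw [hK] at hint
  refine MemLp.of_bound hint.aestronglyMeasurable (∑ n ∈ range (K + 1), ‖x n‖)
    (ae_of_all _ fun t => ?_)
  exact single_le_sum (f := fun n => ‖x n‖) (fun n _ => norm_nonneg _)
    (mem_range.2 (Nat.lt_succ_of_le (quantile_le hK.ge t)))

variable [NormedSpace ℝ E] [CompleteSpace E]

lemma setIntegral_comp_quantile_cdf (x : ℕ → E) (hμ : ∀ n, 0 ≤ μ n) {M : ℕ}
    (hM : cdf μ M ≤ 1) :
    ∫ t in Set.Ioc 0 (cdf μ M), x (quantile (cdf μ) t) = ∑ n ∈ Icc 1 M, μ n • x n := by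
  induction M with
  | zero => simp
  | succ M ih =>
    have hle := monotone_cdf hμ M.le_succ
    have hconst : Set.EqOn (fun t => x (quantile (cdf μ) t)) (fun _ => x (M + 1))
        (Set.Ioc (cdf μ M) (cdf μ (M + 1))) := fun t ht =>
      congrArg x (quantile_eq_of_mem_Ioc (monotone_cdf hμ) hM ht)
    rw [← Set.Ioc_union_Ioc_eq_Ioc (cdf_nonneg hμ M) hle,
      setIntegral_union (Set.Ioc_disjoint_Ioc_of_le le_rfl) measurableSet_Ioc
        (integrableOn_comp_quantile_cdf x hμ (hle.trans hM))
        ((integrableOn_const measure_Ioc_lt_top.ne).congr_fun hconst.symm measurableSet_Ioc),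
      ih (hle.trans hM), setIntegral_congr_fun measurableSet_Ioc hconst, setIntegral_const,
      Real.volume_real_Ioc_of_le hle, cdf_succ, sum_Icc_succ_top (by omega), add_sub_cancel_left]

end Quantile

section Jensen

variable {Ω E : Type*} [MeasurableSpace Ω] {μ : Measure Ω} [NormedAddCommGroup E] {r : ℝ}

lemma MeasureTheory.MemLp.integrable_norm_rpow_ofReal (hr : 0 < r) {f : Ω → E}
    (hf : MemLp f (ENNReal.ofReal r) μ) : Integrable (fun ω => ‖f ω‖ ^ r) μ := by
  simpa [ENNReal.toReal_ofReal hr.le] using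
    hf.integrable_norm_rpow (by simpa using hr) ENNReal.ofReal_ne_top

lemma integrable_variationSum (hr : 0 < r) {J : ℕ} {f : Fin (J + 1) → Ω → E}
    (hf : ∀ j, MemLp (f j) (ENNReal.ofReal r) μ) :
    Integrable (fun ω => variationSum r fun j => f j ω) μ :=
  integrable_finsetSum _ fun j _ =>
    ((hf j.succ).sub (hf j.castSucc)).integrable_norm_rpow_ofReal hr

variable [NormedSpace ℝ E]

lemma norm_integral_rpow_le [IsProbabilityMeasure μ] (hr : 1 ≤ r) {f : Ω → E}
    (hf : MemLp f (ENNReal.ofReal r) μ) : ‖∫ ω, f ω ∂μ‖ ^ r ≤ ∫ ω, ‖f ω‖ ^ r ∂μ :=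
  calc ‖∫ ω, f ω ∂μ‖ ^ r ≤ (∫ ω, ‖f ω‖ ∂μ) ^ r :=
        Real.rpow_le_rpow (norm_nonneg _) (norm_integral_le_integral_norm f) (by linarith)
    _ ≤ ∫ ω, ‖f ω‖ ^ r ∂μ :=
        (convexOn_rpow hr).map_integral_le (Real.continuous_rpow_const (by linarith)).continuousOn
          isClosed_Ici (ae_of_all _ fun _ => norm_nonneg _)
          (hf.integrable (by simpa using hr)).norm (hf.integrable_norm_rpow_ofReal (by linarith))

lemma variationSum_integral_le [IsProbabilityMeasure μ] (hr : 1 ≤ r) {J : ℕ}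
    {f : Fin (J + 1) → Ω → E} (hf : ∀ j, MemLp (f j) (ENNReal.ofReal r) μ) :
    variationSum r (fun j => ∫ ω, f j ω ∂μ) ≤ ∫ ω, variationSum r (fun j => f j ω) ∂μ := by
  have hint : ∀ j, Integrable (f j) μ := fun j => (hf j).integrable (by simpa using hr)
  simp only [variationSum]
  rw [integral_finsetSum _ fun j _ =>
    ((hf j.succ).sub (hf j.castSucc)).integrable_norm_rpow_ofReal (by linarith)]
  refine sum_le_sum fun j _ => ?_
  rw [← integral_sub (hint _) (hint _)]
  exact norm_integral_rpow_le hr ((hf j.succ).sub (hf j.castSucc))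

end Jensen

instance : IsProbabilityMeasure (volume.restrict (Set.Ioc (0 : ℝ) 1)) := ⟨by simp⟩

theorem rVar_le_rVar_of_mixture {x y : ℕ → ℂ} {r : ℝ} (hr : 1 ≤ r) (μ : ℕ → ℕ → ℝ)
    (hμ : ∀ N n, 0 ≤ μ N n) (hμ1 : ∀ N, 1 ≤ N → cdf (μ N) N = 1)
    (hdom : ∀ N N', 1 ≤ N → N ≤ N' → cdf (μ N') ≤ cdf (μ N))
    (hy : ∀ N, 1 ≤ N → y N = ∑ n ∈ Icc 1 N, μ N n • x n) :
    rVar r y {N | 1 ≤ N} ≤ rVar r x {N | 1 ≤ N} := by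
  rcases eq_or_ne (rVar r x {N | 1 ≤ N}) ⊤ with hx | hx
  · exact hx ▸ le_top
  refine rVar_le_of_variationSum_le (by linarith) hx fun J k hk hkA => ?_
  have hk1 : ∀ j, cdf (μ (k j)) (k j) = 1 := fun j => hμ1 _ (hkA j)
  set f : Fin (J + 1) → ℝ → ℂ := fun j t => x (quantile (cdf (μ (k j))) t)
  have hf : ∀ j, MemLp (f j) (ENNReal.ofReal r) (volume.restrict (Set.Ioc 0 1)) :=
    fun j => memLp_comp_quantile_cdf x (hμ _) (hk1 j) _
  have hyf : y ∘ k = fun j => ∫ t in Set.Ioc 0 1, f j t := funext fun j => by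
    rw [Function.comp_apply, hy _ (hkA j), ← setIntegral_comp_quantile_cdf x (hμ _) (hk1 j).le,
      hk1 j]
  have hbound : ∀ t ∈ Set.Ioc (0 : ℝ) 1,
      variationSum r (fun j => f j t) ≤ (rVar r x {N | 1 ≤ N}).toReal ^ r := fun t ht =>
    variationSum_le_toReal_rVar_rpow (m := fun j => quantile (cdf (μ (k j))) t) (by linarith) hx
      (fun i j hij => quantile_le_quantile (hk1 j).ge (hdom _ _ (hkA i) (hk.monotone hij)) t)
      (fun j => quantile_pos (hk1 j).ge (cdf_zero _) ht.1)
  rw [hyf]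
  calc variationSum r (fun j => ∫ t in Set.Ioc 0 1, f j t)
      ≤ ∫ t in Set.Ioc 0 1, variationSum r (fun j => f j t) := variationSum_integral_le hr hf
    _ ≤ ∫ t in Set.Ioc 0 1, (rVar r x {N | 1 ≤ N}).toReal ^ r :=
      setIntegral_mono_on (integrable_variationSum (by linarith) hf)
        (integrableOn_const measure_Ioc_lt_top.ne) measurableSet_Ioc hbound
    _ = (rVar r x {N | 1 ≤ N}).toReal ^ r := by simp

section Weights

lemma sum_Icc_by_parts {R M : Type*} [Ring R] [AddCommGroup M] [Module R M] (f : ℕ → R)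
    (g : ℕ → M) (N : ℕ) :
    ∑ n ∈ Icc 1 N, f n • g n =
      ∑ n ∈ Icc 1 N, (f n - f (n + 1)) • ∑ i ∈ Icc 1 n, g i + f (N + 1) • ∑ i ∈ Icc 1 N, g i := by
  induction N with
  | zero => simp
  | succ N ih =>
    rw [sum_Icc_succ_top (by omega), ih, sum_Icc_succ_top (by omega), sum_Icc_succ_top (by omega)]
    simp only [smul_add, sub_smul]
    abel

lemma sum_Icc_one_pos {u : ℕ → ℝ} (hu : ∀ n, 0 < u n) {N : ℕ} (hN : 1 ≤ N) :
    0 < ∑ n ∈ Icc 1 N, u n :=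
  sum_pos (fun n _ => hu n) ⟨1, mem_Icc.2 ⟨le_rfl, hN⟩⟩

noncomputable def weightedAvg (u : ℕ → ℝ) (c : ℕ → ℂ) (N : ℕ) : ℂ :=
  (∑ n ∈ Icc 1 N, c n * (u n : ℂ)) / ((∑ n ∈ Icc 1 N, u n : ℝ) : ℂ)

-- Cutting `w / v` off after `N` makes Abel summation up to `N` free of a boundary term.
noncomputable def truncRatio (w v : ℕ → ℝ) (N n : ℕ) : ℝ := if n ≤ N then w n / v n else 0

noncomputable def mixingWeight (w v : ℕ → ℝ) (N n : ℕ) : ℝ :=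
  (truncRatio w v N n - truncRatio w v N (n + 1)) * (∑ i ∈ Icc 1 n, v i) / ∑ i ∈ Icc 1 N, w i

variable {w v : ℕ → ℝ} {N : ℕ}

lemma sum_truncRatio_smul {M : Type*} [AddCommGroup M] [Module ℝ M] (hv : ∀ n, 0 < v n)
    (g : ℕ → M) (N : ℕ) :
    ∑ n ∈ Icc 1 N, (truncRatio w v N n - truncRatio w v N (n + 1)) • ∑ i ∈ Icc 1 n, v i • g i =
      ∑ n ∈ Icc 1 N, w n • g n := by
  have h := sum_Icc_by_parts (truncRatio w v N) (fun i => v i • g i) N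
  rw [truncRatio, if_neg (by omega), zero_smul, add_zero] at h
  rw [← h]
  refine sum_congr rfl fun n hn => ?_
  rw [smul_smul, truncRatio, if_pos (mem_Icc.1 hn).2, div_mul_cancel₀ _ (hv n).ne']

lemma truncRatio_succ_le (hw : ∀ n, 0 < w n) (hv : ∀ n, 0 < v n)
    (hwv : ∀ m n, m ≤ n → w n / v n ≤ w m / v m) (n : ℕ) :
    truncRatio w v N (n + 1) ≤ truncRatio w v N n := by
  unfold truncRatio
  split_ifs with h1 h2 h2
  · exact hwv _ _ n.le_succ
  · omega
  · exact (div_pos (hw n) (hv n)).le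
  · rfl

lemma mixingWeight_nonneg (hw : ∀ n, 0 < w n) (hv : ∀ n, 0 < v n)
    (hwv : ∀ m n, m ≤ n → w n / v n ≤ w m / v m) (N n : ℕ) : 0 ≤ mixingWeight w v N n :=
  div_nonneg (mul_nonneg (sub_nonneg.2 (truncRatio_succ_le hw hv hwv n))
    (sum_nonneg fun i _ => (hv i).le)) (sum_nonneg fun i _ => (hw i).le)

lemma mixingWeight_of_lt {n : ℕ} (h : N < n) : mixingWeight w v N n = 0 := by
  simp [mixingWeight, truncRatio, h.not_ge, (h.trans n.lt_succ_self).not_ge]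

lemma cdf_mixingWeight_self (hw : ∀ n, 0 < w n) (hv : ∀ n, 0 < v n) (hN : 1 ≤ N) :
    cdf (mixingWeight w v N) N = 1 := by
  have h := sum_truncRatio_smul (w := w) hv (fun _ => (1 : ℝ)) N
  simp only [smul_eq_mul, mul_one] at h
  rw [cdf]
  simp only [mixingWeight]
  rw [← sum_div, h, div_self (sum_Icc_one_pos hw hN).ne']

lemma cdf_mixingWeight_of_le (hw : ∀ n, 0 < w n) (hv : ∀ n, 0 < v n) (hN : 1 ≤ N) {m : ℕ}
    (hm : N ≤ m) : cdf (mixingWeight w v N) m = 1 := by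
  induction m, hm using Nat.le_induction with
  | base => exact cdf_mixingWeight_self hw hv hN
  | succ m hm ih => rw [cdf_succ, ih, mixingWeight_of_lt (by omega), add_zero]

lemma cdf_mixingWeight_of_lt {m : ℕ} (hm : m < N) :
    cdf (mixingWeight w v N) m =
      (∑ n ∈ Icc 1 m, (w n / v n - w (n + 1) / v (n + 1)) * ∑ i ∈ Icc 1 n, v i) /
        ∑ i ∈ Icc 1 N, w i := by
  rw [cdf, sum_div]
  refine sum_congr rfl fun n hn => ?_
  have := (mem_Icc.1 hn).2
  simp only [mixingWeight, truncRatio, if_pos (by omega : n ≤ N), if_pos (by omega : n + 1 ≤ N)]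

lemma cdf_mixingWeight_le_of_le (hw : ∀ n, 0 < w n) (hv : ∀ n, 0 < v n)
    (hwv : ∀ m n, m ≤ n → w n / v n ≤ w m / v m) {N' : ℕ} (hN : 1 ≤ N) (hNN' : N ≤ N') :
    cdf (mixingWeight w v N') ≤ cdf (mixingWeight w v N) := by
  intro m
  rcases lt_or_ge m N with hm | hm
  · rw [cdf_mixingWeight_of_lt hm, cdf_mixingWeight_of_lt (hm.trans_le hNN')]
    refine div_le_div_of_nonneg_left (sum_nonneg fun n _ => mul_nonneg
      (sub_nonneg.2 (hwv _ _ n.le_succ)) (sum_nonneg fun i _ => (hv i).le))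
      (sum_Icc_one_pos hw hN) (sum_le_sum_of_subset_of_nonneg (Icc_subset_Icc_right hNN')
        fun i _ _ => (hw i).le)
  · rw [cdf_mixingWeight_of_le hw hv hN hm,
      ← cdf_mixingWeight_of_le hw hv (hN.trans hNN') (le_max_right m N')]
    exact monotone_cdf (mixingWeight_nonneg hw hv hwv N') (le_max_left m N')

lemma weightedAvg_eq_sum_mixingWeight (hv : ∀ n, 0 < v n) (c : ℕ → ℂ) :
    weightedAvg w c N = ∑ n ∈ Icc 1 N, mixingWeight w v N n • weightedAvg v c n := by
  have h := sum_truncRatio_smul (w := w) hv c N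
  calc weightedAvg w c N = (∑ n ∈ Icc 1 N, w n • c n) / ((∑ i ∈ Icc 1 N, w i : ℝ) : ℂ) := by
        simp [weightedAvg, Complex.real_smul, mul_comm]
    _ = ∑ n ∈ Icc 1 N, mixingWeight w v N n • weightedAvg v c n := by
      rw [← h, sum_div]
      refine sum_congr rfl fun n hn => ?_
      have hB : ((∑ i ∈ Icc 1 n, v i : ℝ) : ℂ) ≠ 0 := by
        exact_mod_cast (sum_Icc_one_pos hv (mem_Icc.1 hn).1).ne'
      simp only [mixingWeight, weightedAvg, Complex.real_smul, mul_comm (c _)]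
      push_cast at hB ⊢
      field_simp

end Weights

/-- Weight-comparison principle for `r`-variations of weighted averages:
if `w_n/v_n` is decreasing then `V_r(a_N / A_N) ≤ C · V_r(b_N / B_N)` with an absolute
constant `C`, where `a_N = Σ_{n≤N} c_n w_n`, `A_N = Σ_{n≤N} w_n`, etc. -/
theorem rVar_weighted_average_comparison :
    ∃ C : ℝ, 0 < C ∧ ∀ (r : ℝ), 2 < r → ∀ (c : ℕ → ℂ) (w v : ℕ → ℝ),
      (∀ n, 0 < w n) → (∀ n, 0 < v n) →
      (∀ m n, m ≤ n → w n / v n ≤ w m / v m) →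
      rVar r
          (fun N => (∑ n ∈ Finset.Icc 1 N, c n * (w n : ℂ)) /
            ((∑ n ∈ Finset.Icc 1 N, w n : ℝ) : ℂ))
          {N : ℕ | 1 ≤ N} ≤
        ENNReal.ofReal C *
          rVar r
            (fun N => (∑ n ∈ Finset.Icc 1 N, c n * (v n : ℂ)) /
              ((∑ n ∈ Finset.Icc 1 N, v n : ℝ) : ℂ))
            {N : ℕ | 1 ≤ N} := by
  refine ⟨1, one_pos, fun r hr c w v hw hv hwv => ?_⟩
  rw [ENNReal.ofReal_one, one_mul]
  exact rVar_le_rVar_of_mixture (by linarith) (mixingWeight w v) (mixingWeight_nonneg hw hv hwv)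
    (fun N hN => cdf_mixingWeight_self hw hv hN)
    (fun N N' hN hNN' => cdf_mixingWeight_le_of_le hw hv hwv hN hNN')
    fun N _ => weightedAvg_eq_sum_mixingWeight hv c
end
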